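/- arXiv:2209.04690 — 2 statements merged into one kernel-verified Lean document; each statement's English description precedes it below -/
import Mathlib

section
/- Let n, m be positive integers with m ≤ n, let f : ℝⁿ → ℝ and g : ℝⁿ → ℝᵐ be C² functions, and let x* be a local minimum of f subject to the constraint g = 0 such that the Jacobian matrix Jg(x*) has full rank m. Then there exists a vector λ* ∈ ℝᵐ such that ∇f(x*) = Jg(x*)ᵀ λ*, and for every v ∈ Ker(Jg(x*)) one has vᵀ(∇²f(x*) − Σᵢ₌₁ᵐ λᵢ* ∇²gᵢ(x*)) v ≥ 0. -/
/-! Along any C² curve `c` inside the constraint set `{g = 0}` through `x*` with `c'(0) = v`, the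
function `f ∘ c` has a local minimum at `0`. Such curves exist for every `v ∈ ker Jg(x*)` by the
implicit function theorem, because `Jg(x*)` is onto. The first-order condition
`∇f(x*) ⊥ ker Jg(x*)` gives the multiplier `λ* = Df(x*) ∘ R` for any right inverse `R` of `Dg(x*)`.
For the second-order condition, `(f ∘ c)''(0) = D²f(v, v) + Df(c''(0)) ≥ 0`, while differentiating
`g ∘ c = 0` twice gives `D²g(v, v) + Dg(c''(0)) = 0`; since `Df = λ* ∘ Dg`, the unknown `c''(0)`
cancels and what remains is `D²f(v, v) - λ*(D²g(v, v)) ≥ 0`. -/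

open Matrix Set Metric

noncomputable def grad {n : ℕ} (f : (Fin n → ℝ) → ℝ) (x : Fin n → ℝ) : Fin n → ℝ :=
  fun i => fderiv ℝ f x (Pi.single i 1)

noncomputable def hess {n : ℕ} (f : (Fin n → ℝ) → ℝ) (x : Fin n → ℝ) :
    Matrix (Fin n) (Fin n) ℝ :=
  Matrix.of fun i j => fderiv ℝ (fun y => fderiv ℝ f y (Pi.single j 1)) x (Pi.single i 1)

noncomputable def jac {n m : ℕ} (g : (Fin n → ℝ) → Fin m → ℝ) (x : Fin n → ℝ) :
    Matrix (Fin m) (Fin n) ℝ :=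
  Matrix.of fun i j => fderiv ℝ (fun y => g y i) x (Pi.single j 1)

noncomputable def euclNorm {n : ℕ} (v : Fin n → ℝ) : ℝ := Real.sqrt (v ⬝ᵥ v)

open Filter Topology

theorem IsLocalMinOn.isLocalMin_comp {X Y β : Type*} [TopologicalSpace X] [TopologicalSpace Y]
    [Preorder β] {f : X → β} {s : Set X} {x : X} (hmin : IsLocalMinOn f s x) {c : Y → X} {a : Y}
    (hc : ContinuousAt c a) (hca : c a = x) (hcs : ∀ᶠ t in 𝓝 a, c t ∈ s) :
    IsLocalMin (f ∘ c) a :=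
  IsMinFilter.comp_tendsto (hca ▸ hmin) (tendsto_nhdsWithin_iff.2 ⟨hca ▸ hc.tendsto, hcs⟩)

theorem deriv_deriv_eq_zero_of_eventuallyEq_const {F : Type*} [NormedAddCommGroup F]
    [NormedSpace ℝ F] {φ : ℝ → F} {a : ℝ} {b : F} (h : φ =ᶠ[𝓝 a] fun _ => b) :
    deriv (deriv φ) a = 0 := by
  have : deriv φ =ᶠ[𝓝 a] fun _ => 0 := by simpa using h.deriv
  simp [this.deriv_eq]

/-- If `(f')'(a) < 0`, the second-derivative test makes `a` also a local maximum, so `f` is locally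
constant near `a` and `(f')'(a) = 0`. -/
theorem IsLocalMin.deriv_deriv_nonneg {f : ℝ → ℝ} {a : ℝ} (h : IsLocalMin f a)
    (hc : ContinuousAt f a) : 0 ≤ deriv (deriv f) a := by
  by_contra! hneg
  have hmax : IsLocalMax f a := isLocalMax_of_deriv_deriv_neg hneg h.deriv_eq_zero hc
  have hconst : f =ᶠ[𝓝 a] fun _ => f a := by
    filter_upwards [h, hmax] with y hmin hmax using le_antisymm hmax hmin
  exact hneg.ne (deriv_deriv_eq_zero_of_eventuallyEq_const hconst)

section Calculus

variable {E F G : Type*} [NormedAddCommGroup E] [NormedSpace ℝ E] [NormedAddCommGroup F]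
  [NormedSpace ℝ F] [NormedAddCommGroup G] [NormedSpace ℝ G]

theorem deriv_deriv_comp {h : E → F} {c : ℝ → E} {a : ℝ} (hh : ContDiffAt ℝ 2 h (c a))
    (hc : ContDiffAt ℝ 2 c a) :
    deriv (deriv (h ∘ c)) a = fderiv ℝ (fderiv ℝ h) (c a) (deriv c a) (deriv c a) +
      fderiv ℝ h (c a) (deriv (deriv c) a) := by
  have hc_near : ∀ᶠ t in 𝓝 a, DifferentiableAt ℝ c t :=
    (hc.eventually (by simp)).mono fun t ht => ht.differentiableAt two_ne_zero
  have hh_near : ∀ᶠ t in 𝓝 a, DifferentiableAt ℝ h (c t) :=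
    hc.continuousAt.eventually
      ((hh.eventually (by simp)).mono fun y hy => hy.differentiableAt two_ne_zero)
  have hderiv : deriv (h ∘ c) =ᶠ[𝓝 a] fun t => fderiv ℝ h (c t) (deriv c t) := by
    filter_upwards [hc_near, hh_near] with t hct hht using fderiv_comp_deriv t hht hct
  have hD2h : HasFDerivAt (fderiv ℝ h) (fderiv ℝ (fderiv ℝ h) (c a)) (c a) :=
    ((hh.fderiv_right (m := 1) le_rfl).differentiableAt one_ne_zero).hasFDerivAt
  have hc'' : HasDerivAt (deriv c) (deriv (deriv c) a) a :=
    ((hc.derivWithin (m := 1) le_rfl).differentiableAt one_ne_zero).hasDerivAt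
  rw [hderiv.deriv_eq]
  exact ((hD2h.comp_hasDerivAt a (hc.differentiableAt two_ne_zero).hasDerivAt).clm_apply hc'').deriv

theorem ContinuousLinearMap.fderiv_fderiv_comp_apply (L : F →L[ℝ] G) {g : E → F} {x : E}
    (hg : ContDiffAt ℝ 2 g x) (v w : E) :
    fderiv ℝ (fderiv ℝ (L ∘ g)) x v w = L (fderiv ℝ (fderiv ℝ g) x v w) := by
  have hnear : fderiv ℝ (L ∘ g) =ᶠ[𝓝 x] fun y => L ∘L fderiv ℝ g y := by
    filter_upwards [hg.eventually (by simp)] with y hy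
    rw [fderiv_comp y L.differentiableAt (hy.differentiableAt two_ne_zero), L.fderiv]
  have hD2g : HasFDerivAt (fderiv ℝ g) (fderiv ℝ (fderiv ℝ g) x) x :=
    ((hg.fderiv_right (m := 1) le_rfl).differentiableAt one_ne_zero).hasFDerivAt
  have hcomp : HasFDerivAt (fun y => L ∘L fderiv ℝ g y)
      (compL ℝ E F G L ∘L fderiv ℝ (fderiv ℝ g) x) x :=
    (compL ℝ E F G L).hasFDerivAt.comp x hD2g
  rw [hnear.fderiv_eq, hcomp.fderiv]
  rfl

end Calculus

section LevelSet

variable {E F : Type*} [NormedAddCommGroup E] [NormedSpace ℝ E] [NormedAddCommGroup F]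
  [NormedSpace ℝ F] [CompleteSpace F]

/-- The curve is `t ↦ x + t • v + R (μ t)`, where `μ` is the implicit function solving
`g (x + t • v + R μ) = g x`; its linearization in `μ` is `Dg(x) ∘ R = id`. -/
theorem ContDiffAt.exists_curve_levelSet {g : E → F} {x : E} {k : WithTop ℕ∞}
    (hg : ContDiffAt ℝ k g x) (hk : k ≠ 0) {R : F →L[ℝ] E}
    (hR : fderiv ℝ g x ∘L R = .id ℝ F) {v : E} (hv : fderiv ℝ g x v = 0) :
    ∃ c : ℝ → E, ContDiffAt ℝ k c 0 ∧ c 0 = x ∧ deriv c 0 = v ∧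
      ∀ᶠ t in 𝓝 0, g (c t) = g x := by
  let A : ℝ × F →L[ℝ] E := (ContinuousLinearMap.fst ℝ ℝ F).smulRight v + R ∘L .snd ℝ ℝ F
  let h : ℝ × F → F := fun p => g (x + A p)
  have hA0 : x + A 0 = x := by simp
  have hh : ContDiffAt ℝ k h 0 := by
    rw [← hA0] at hg
    exact hg.comp (0 : ℝ × F) (contDiffAt_const.add A.contDiff.contDiffAt)
  have hh' : fderiv ℝ h 0 = fderiv ℝ g x ∘L A := by
    have hgx : HasFDerivAt g (fderiv ℝ g x) (x + A 0) := by
      rw [hA0]; exact (hg.differentiableAt hk).hasFDerivAt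
    exact (hgx.comp (0 : ℝ × F) (A.hasFDerivAt.const_add x)).fderiv
  have hinv : (fderiv ℝ h 0 ∘L .inr ℝ ℝ F).IsInvertible := by
    have : fderiv ℝ h 0 ∘L .inr ℝ ℝ F = .id ℝ F := by
      rw [← hR, hh']; ext; simp [A]
    rw [this]; exact ⟨.refl ℝ F, rfl⟩
  have hinl : fderiv ℝ h 0 ∘L .inl ℝ ℝ F = 0 := by
    rw [hh']; ext; simp [A, hv]
  set μ := hh.implicitFunction hk hinv
  have hμ0 : μ 0 = 0 := hh.implicitFunction_apply_self hk hinv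
  have hμ' : HasDerivAt μ 0 0 := by
    simpa [hinl] using (hh.hasStrictFDerivAt_implicitFunction hk hinv).hasFDerivAt.hasDerivAt
  refine ⟨fun t => x + A (t, μ t), ?_, by simp [hμ0, A], ?_, ?_⟩
  · exact contDiffAt_const.add (A.contDiff.contDiffAt.comp 0
      (contDiffAt_id.prodMk (hh.contDiffAt_implicitFunction hk hinv)))
  · have := (A.hasFDerivAt.comp_hasDerivAt (0 : ℝ)
      ((hasDerivAt_id (0 : ℝ)).prodMk hμ')).const_add x
    simpa [A] using this.deriv
  · filter_upwards [hh.eventually_apply_implicitFunction hk hinv] with t ht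
    simpa [h, hA0] using ht

variable {f : E → ℝ} {g : E → F} {x : E} {R : F →L[ℝ] E}

theorem IsLocalMinOn.fderiv_apply_eq_zero_of_mem_ker
    (hmin : IsLocalMinOn f {y | g y = g x} x) (hf : DifferentiableAt ℝ f x)
    (hg : ContDiffAt ℝ 1 g x) (hR : fderiv ℝ g x ∘L R = .id ℝ F) {v : E}
    (hv : fderiv ℝ g x v = 0) : fderiv ℝ f x v = 0 := by
  obtain ⟨c, hc, hc0, hcv, hcg⟩ := hg.exists_curve_levelSet one_ne_zero hR hv
  have hfc : IsLocalMin (f ∘ c) 0 := hmin.isLocalMin_comp hc.continuousAt hc0 hcg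
  rw [← hcv, ← hc0, ← fderiv_comp_deriv 0 (hc0 ▸ hf) (hc.differentiableAt one_ne_zero)]
  exact hfc.deriv_eq_zero

theorem IsLocalMinOn.fderiv_eq_comp_fderiv (hmin : IsLocalMinOn f {y | g y = g x} x)
    (hf : DifferentiableAt ℝ f x) (hg : ContDiffAt ℝ 1 g x)
    (hR : fderiv ℝ g x ∘L R = .id ℝ F) :
    fderiv ℝ f x = (fderiv ℝ f x ∘L R) ∘L fderiv ℝ g x := by
  ext w
  have hker : fderiv ℝ g x (w - R (fderiv ℝ g x w)) = 0 := by
    rw [map_sub, ← ContinuousLinearMap.comp_apply, hR, ContinuousLinearMap.id_apply, sub_self]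
  have := hmin.fderiv_apply_eq_zero_of_mem_ker hf hg hR hker
  rwa [map_sub, sub_eq_zero] at this

theorem IsLocalMinOn.fderiv_fderiv_sub_multiplier_nonneg
    (hmin : IsLocalMinOn f {y | g y = g x} x) (hf : ContDiffAt ℝ 2 f x) (hg : ContDiffAt ℝ 2 g x)
    (hR : fderiv ℝ g x ∘L R = .id ℝ F) {Λ : F →L[ℝ] ℝ}
    (hΛ : fderiv ℝ f x = Λ ∘L fderiv ℝ g x) {v : E} (hv : fderiv ℝ g x v = 0) :
    0 ≤ fderiv ℝ (fderiv ℝ f) x v v - Λ (fderiv ℝ (fderiv ℝ g) x v v) := by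
  obtain ⟨c, hc, hc0, hcv, hcg⟩ := hg.exists_curve_levelSet two_ne_zero hR hv
  have hfc : 0 ≤ deriv (deriv (f ∘ c)) 0 :=
    (hmin.isLocalMin_comp hc.continuousAt hc0 hcg).deriv_deriv_nonneg
      ((hc0 ▸ hf.continuousAt).comp hc.continuousAt)
  have hgc : deriv (deriv (g ∘ c)) 0 = 0 := deriv_deriv_eq_zero_of_eventuallyEq_const hcg
  rw [deriv_deriv_comp (hc0 ▸ hf) hc, hc0, hcv, hΛ] at hfc
  rw [deriv_deriv_comp (hc0 ▸ hg) hc, hc0, hcv] at hgc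
  rw [ContinuousLinearMap.comp_apply, eq_neg_of_add_eq_zero_right hgc, map_neg] at hfc
  simpa [sub_eq_add_neg] using hfc

end LevelSet

section Coordinates

variable {n m : ℕ} {f : (Fin n → ℝ) → ℝ} {g : (Fin n → ℝ) → Fin m → ℝ} {x : Fin n → ℝ}

theorem jac_eq_toMatrix' (hg : DifferentiableAt ℝ g x) :
    jac g x = LinearMap.toMatrix' (fderiv ℝ g x : (Fin n → ℝ) →ₗ[ℝ] Fin m → ℝ) := by
  ext i j
  simp [jac, LinearMap.toMatrix'_apply, fderiv_apply hg]

theorem jac_mulVec (hg : DifferentiableAt ℝ g x) (v : Fin n → ℝ) :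
    jac g x *ᵥ v = fderiv ℝ g x v := by
  rw [jac_eq_toMatrix' hg, LinearMap.toMatrix'_mulVec]; rfl

theorem range_fderiv_eq_top_of_rank_jac (hg : DifferentiableAt ℝ g x)
    (hrank : (jac g x).rank = m) : (fderiv ℝ g x).range = ⊤ := by
  have h1 : (jac g x).mulVecLin = fderiv ℝ g x := LinearMap.ext (jac_mulVec hg)
  rw [Matrix.rank, h1] at hrank
  exact Submodule.eq_top_of_finrank_eq (hrank.trans (Module.finrank_fin_fun ℝ).symm)

theorem dual_apply_eq_dotProduct {ι : Type*} [Fintype ι] [DecidableEq ι] (Λ : (ι → ℝ) →L[ℝ] ℝ)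
    (u : ι → ℝ) : Λ u = u ⬝ᵥ fun i => Λ (Pi.single i 1) := by
  conv_lhs => rw [pi_eq_sum_univ' u]
  simp [map_sum, dotProduct]

theorem grad_eq_transpose_jac_mulVec (hg : DifferentiableAt ℝ g x) {Λ : (Fin m → ℝ) →L[ℝ] ℝ}
    (hΛ : fderiv ℝ f x = Λ ∘L fderiv ℝ g x) :
    grad f x = (jac g x)ᵀ *ᵥ fun i => Λ (Pi.single i 1) := by
  ext j
  rw [grad, hΛ, ContinuousLinearMap.comp_apply, ← jac_mulVec hg, mulVec_single_one,
    dual_apply_eq_dotProduct Λ]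
  rfl

theorem hess_eq_toMatrix₂' (hf : DifferentiableAt ℝ (fderiv ℝ f) x) :
    hess f x = LinearMap.toMatrix₂' ℝ (fderiv ℝ (fderiv ℝ f) x).toLinearMap₁₂ := by
  ext i j
  have hrow := ((ContinuousLinearMap.apply ℝ ℝ (Pi.single j 1 : Fin n → ℝ)).hasFDerivAt.comp x
    hf.hasFDerivAt).fderiv
  rw [LinearMap.toMatrix₂'_apply]
  exact congrArg (fun T => T (Pi.single i 1)) hrow

theorem dotProduct_hess_mulVec (hf : DifferentiableAt ℝ (fderiv ℝ f) x) (v : Fin n → ℝ) :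
    v ⬝ᵥ (hess f x *ᵥ v) = fderiv ℝ (fderiv ℝ f) x v v := by
  rw [hess_eq_toMatrix₂' hf, ← Matrix.toLinearMap₂'_apply', Matrix.toLinearMap₂'_toMatrix']
  rfl

theorem dotProduct_lagrangian_hess_mulVec (hf : ContDiffAt ℝ 2 f x) (hg : ContDiffAt ℝ 2 g x)
    (Λ : (Fin m → ℝ) →L[ℝ] ℝ) (v : Fin n → ℝ) :
    v ⬝ᵥ ((hess f x - ∑ i, Λ (Pi.single i 1) • hess (fun y => g y i) x) *ᵥ v) =
      fderiv ℝ (fderiv ℝ f) x v v - Λ (fderiv ℝ (fderiv ℝ g) x v v) := by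
  have hD2 {h : (Fin n → ℝ) → ℝ} (hh : ContDiffAt ℝ 2 h x) :
      DifferentiableAt ℝ (fderiv ℝ h) x :=
    (hh.fderiv_right (m := 1) le_rfl).differentiableAt one_ne_zero
  let proj (i : Fin m) := ContinuousLinearMap.proj (R := ℝ) (φ := fun _ : Fin m => ℝ) i
  have hgi (i : Fin m) : ContDiffAt ℝ 2 (fun y => g y i) x :=
    (proj i).contDiff.contDiffAt.comp x hg
  rw [sub_mulVec, dotProduct_sub, dotProduct_hess_mulVec (hD2 hf), dual_apply_eq_dotProduct Λ,
    sum_mulVec, dotProduct_sum]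
  congr 1
  refine Finset.sum_congr rfl fun i _ => ?_
  rw [smul_mulVec, dotProduct_smul, dotProduct_hess_mulVec (hD2 (hgi i)), smul_eq_mul, mul_comm]
  exact congrArg (· * _) ((proj i).fderiv_fderiv_comp_apply hg v v)

end Coordinates

theorem stmt_0_general {n m : ℕ}
    (f : (Fin n → ℝ) → ℝ) (g : (Fin n → ℝ) → Fin m → ℝ)
    (hf : ContDiff ℝ 2 f) (hg : ContDiff ℝ 2 g)
    (xs : Fin n → ℝ) (hgxs : g xs = 0)
    (hmin : ∃ U ∈ nhds xs, ∀ y ∈ U, g y = 0 → f xs ≤ f y)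
    (hrank : (jac g xs).rank = m) :
    ∃ lam : Fin m → ℝ,
      grad f xs = (jac g xs)ᵀ *ᵥ lam ∧
      ∀ v : Fin n → ℝ, jac g xs *ᵥ v = 0 →
        0 ≤ v ⬝ᵥ ((hess f xs - ∑ i, lam i • hess (fun y => g y i) xs) *ᵥ v) := by
  have hgd : DifferentiableAt ℝ g xs := hg.differentiable two_ne_zero xs
  have hmin' : IsLocalMinOn f {y | g y = g xs} xs := by
    obtain ⟨U, hU, hUmin⟩ := hmin
    filter_upwards [inter_mem_nhdsWithin _ hU] with y ⟨hy, hyU⟩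
    exact hUmin y hyU (hy.trans hgxs)
  obtain ⟨R, hR⟩ := (fderiv ℝ g xs).exists_rightInverse_of_surjective
    (range_fderiv_eq_top_of_rank_jac hgd hrank)
  have hΛ := hmin'.fderiv_eq_comp_fderiv (hf.differentiable two_ne_zero xs)
    (hg.contDiffAt.of_le one_le_two) hR
  refine ⟨fun i => (fderiv ℝ f xs ∘L R) (Pi.single i 1),
    grad_eq_transpose_jac_mulVec hgd hΛ, fun v hv => ?_⟩
  rw [jac_mulVec hgd] at hv
  rw [dotProduct_lagrangian_hess_mulVec hf.contDiffAt hg.contDiffAt]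
  exact hmin'.fderiv_fderiv_sub_multiplier_nonneg hf.contDiffAt hg.contDiffAt hR hΛ hv

/-- first- and second-order necessary optimality conditions for an
equality-constrained local minimum. -/
theorem stmt_0 {n m : ℕ} (hm : 0 < m) (hmn : m ≤ n)
    (f : (Fin n → ℝ) → ℝ) (g : (Fin n → ℝ) → Fin m → ℝ)
    (hf : ContDiff ℝ 2 f) (hg : ContDiff ℝ 2 g)
    (xs : Fin n → ℝ) (hgxs : g xs = 0)
    (hmin : ∃ U ∈ nhds xs, ∀ y ∈ U, g y = 0 → f xs ≤ f y)
    (hrank : (jac g xs).rank = m) :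
    ∃ lam : Fin m → ℝ,
      grad f xs = (jac g xs)ᵀ *ᵥ lam ∧
      ∀ v : Fin n → ℝ, jac g xs *ᵥ v = 0 →
        0 ≤ v ⬝ᵥ ((hess f xs - ∑ i, lam i • hess (fun y => g y i) xs) *ᵥ v) :=
  stmt_0_general f g hf hg xs hgxs hmin hrank
end

section
/- Let f : ℝⁿ → ℝ be C², let x* ∈ ℝⁿ with ∇f(x*) ≠ 0, and let v ∈ ℝⁿ be a unit vector with ∇f(x*)ᵀ v = 0. Then there exist ε > 0 and a C² curve γ : (−ε, ε) → ℝⁿ such that γ(0) = x*, γ'(0) = v, ‖γ'(s)‖ = 1 for all s ∈ (−ε, ε), f(γ(s)) = f(x*) for all s ∈ (−ε, ε), and γ(s) ∈ x* + span{v, ∇f(x*)} for all s ∈ (−ε, ε). -/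
/-!
Restrict `f` to the plane `x* + ℝ v + ℝ u`, where `u = ∇f(x*)/|∇f(x*)|`, obtaining `F` on `ℝ²`
with `∇F(0) = (0, |∇f(x*)|)`. Where `∇F ≠ 0`, rotating `∇F` by a right angle and normalising
gives a `C¹` unit vector field tangent to the level curves of `F`; its integral curve `σ`
through `0` is `C²`, keeps `F` constant and starts in direction `(1, 0)`. Since
`(a, b) ↦ a v + b u` is an isometry, `γ = x* + σ₁ v + σ₂ u` is the required curve.
-/

open Matrix Set Metric

section IntegralCurve

variable {E : Type*} [NormedAddCommGroup E] [NormedSpace ℝ E]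

theorem contDiffOn_succ_of_hasDerivAt_comp {V : E → E} {U : Set E} {σ : ℝ → E} {s : Set ℝ}
    (hs : IsOpen s) (hσ : ∀ t ∈ s, HasDerivAt σ (V (σ t)) t) (hσU : MapsTo σ s U) (k : ℕ)
    (hV : ContDiffOn ℝ k V U) : ContDiffOn ℝ (k + 1) σ s := by
  have hdiff : DifferentiableOn ℝ σ s := fun t ht =>
    (hσ t ht).differentiableAt.differentiableWithinAt
  have hderiv : EqOn (V ∘ σ) (deriv σ) s := fun t ht => (hσ t ht).deriv.symm
  induction k with
  | zero =>
    rw [Nat.cast_zero, contDiffOn_succ_iff_deriv_of_isOpen hs, contDiffOn_zero]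
    exact ⟨hdiff, by simp, (hV.continuousOn.comp hdiff.continuousOn hσU).congr hderiv.symm⟩
  | succ k ih =>
    have hσk : ContDiffOn ℝ (k + 1) σ s := ih (hV.of_le (by norm_cast; omega))
    rw [Nat.cast_succ, contDiffOn_succ_iff_deriv_of_isOpen hs]
    exact ⟨hdiff, by simp, (hV.comp hσk hσU).congr hderiv.symm⟩

theorem exists_hasDerivAt_mapsTo_of_contDiffOn [CompleteSpace E] {V : E → E} {U : Set E}
    (hU : IsOpen U) (hV : ContDiffOn ℝ 1 V U) {x₀ : E} (hx₀ : x₀ ∈ U) :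
    ∃ ε > 0, ∃ σ : ℝ → E, σ 0 = x₀ ∧
      ∀ t ∈ Ioo (-ε) ε, HasDerivAt σ (V (σ t)) t ∧ σ t ∈ U := by
  obtain ⟨σ, hσ0, ε₁, hε₁, hσ⟩ :=
    ContDiffAt.exists_forall_mem_closedBall_exists_eq_forall_mem_Ioo_hasDerivAt₀
      (hV.contDiffAt (hU.mem_nhds hx₀)) 0
  simp only [zero_sub, zero_add] at hσ
  have hσU : σ ⁻¹' U ∈ nhds (0 : ℝ) :=
    (hσ 0 (by simp [hε₁])).continuousAt.preimage_mem_nhds (hU.mem_nhds (hσ0 ▸ hx₀))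
  obtain ⟨δ, hδ, hball⟩ := Metric.mem_nhds_iff.mp hσU
  refine ⟨min ε₁ δ, lt_min hε₁ hδ, σ, hσ0, fun t ht => ⟨hσ t ?_, hball ?_⟩⟩
  · exact ⟨by linarith [ht.1, min_le_left ε₁ δ], by linarith [ht.2, min_le_left ε₁ δ]⟩
  · rw [mem_ball, Real.dist_eq, sub_zero, abs_lt]
    exact ⟨by linarith [ht.1, min_le_right ε₁ δ], by linarith [ht.2, min_le_right ε₁ δ]⟩

end IntegralCurve

section LevelCurve

variable {F : ℝ × ℝ → ℝ}

noncomputable def gradSq (F : ℝ × ℝ → ℝ) (p : ℝ × ℝ) : ℝ :=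
  fderiv ℝ F p (1, 0) ^ 2 + fderiv ℝ F p (0, 1) ^ 2

/-- `∇F p` turned clockwise by a right angle and normalised (`0` where `∇F p = 0`). -/
noncomputable def levelTangent (F : ℝ × ℝ → ℝ) (p : ℝ × ℝ) : ℝ × ℝ :=
  (√(gradSq F p))⁻¹ • (fderiv ℝ F p (0, 1), -fderiv ℝ F p (1, 0))

theorem fderiv_apply_eq_fst_add_snd (F : ℝ × ℝ → ℝ) (p q : ℝ × ℝ) :
    fderiv ℝ F p q = q.1 * fderiv ℝ F p (1, 0) + q.2 * fderiv ℝ F p (0, 1) := by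
  conv_lhs => rw [show q = q.1 • ((1 : ℝ), (0 : ℝ)) + q.2 • ((0 : ℝ), (1 : ℝ)) by ext <;> simp]
  rw [map_add, map_smul, map_smul, smul_eq_mul, smul_eq_mul]

theorem fderiv_levelTangent (F : ℝ × ℝ → ℝ) (p : ℝ × ℝ) :
    fderiv ℝ F p (levelTangent F p) = 0 := by
  rw [fderiv_apply_eq_fst_add_snd, levelTangent, Prod.smul_fst, Prod.smul_snd, smul_eq_mul,
    smul_eq_mul]
  ring

theorem levelTangent_sq_add_sq {p : ℝ × ℝ} (hp : 0 < gradSq F p) :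
    (levelTangent F p).1 ^ 2 + (levelTangent F p).2 ^ 2 = 1 := by
  have hsq : √(gradSq F p) ^ 2 = gradSq F p := Real.sq_sqrt hp.le
  have hne : √(gradSq F p) ≠ 0 := (Real.sqrt_pos.2 hp).ne'
  simp only [levelTangent, Prod.smul_fst, Prod.smul_snd, smul_eq_mul]
  field_simp
  rw [hsq, gradSq]
  ring

theorem levelTangent_eq_of_fderiv {p : ℝ × ℝ} (h₁ : fderiv ℝ F p (1, 0) = 0)
    (h₂ : 0 < fderiv ℝ F p (0, 1)) : levelTangent F p = (1, 0) := by
  rw [levelTangent, gradSq, h₁, zero_pow two_ne_zero, zero_add, Real.sqrt_sq h₂.le,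
    neg_zero, Prod.smul_mk, smul_zero, smul_eq_mul, inv_mul_cancel₀ h₂.ne']

theorem contDiff_gradSq {k : WithTop ℕ∞} (hF : ContDiff ℝ (k + 1) F) :
    ContDiff ℝ k (gradSq F) :=
  (((hF.fderiv_right le_rfl).clm_apply contDiff_const).pow 2).add
    (((hF.fderiv_right le_rfl).clm_apply contDiff_const).pow 2)

theorem isOpen_setOf_gradSq_pos (hF : ContDiff ℝ 1 F) : IsOpen {p | 0 < gradSq F p} :=
  isOpen_lt continuous_const (contDiff_gradSq (k := 0) hF).continuous

theorem contDiffOn_levelTangent {k : WithTop ℕ∞} (hF : ContDiff ℝ (k + 1) F) :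
    ContDiffOn ℝ k (levelTangent F) {p | 0 < gradSq F p} := by
  intro p hp
  have hsqrt : ContDiffAt ℝ k (fun q => √(gradSq F q)) p :=
    (Real.contDiffAt_sqrt hp.ne').comp p (contDiff_gradSq hF).contDiffAt
  have h₁ := (hF.fderiv_right le_rfl).clm_apply (contDiff_const (c := ((1 : ℝ), (0 : ℝ))))
  have h₂ := (hF.fderiv_right le_rfl).clm_apply (contDiff_const (c := ((0 : ℝ), (1 : ℝ))))
  exact ((hsqrt.inv (Real.sqrt_pos.2 hp).ne').smul
    (h₂.contDiffAt.prodMk h₁.contDiffAt.neg)).contDiffWithinAt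

theorem exists_unit_speed_level_curve (hF : ContDiff ℝ 2 F) {p₀ : ℝ × ℝ}
    (hp₀ : 0 < gradSq F p₀) :
    ∃ ε > 0, ∃ σ : ℝ → ℝ × ℝ, σ 0 = p₀ ∧ ContDiffOn ℝ 2 σ (Ioo (-ε) ε) ∧
      ∀ t ∈ Ioo (-ε) ε, HasDerivAt σ (levelTangent F (σ t)) t ∧
        (levelTangent F (σ t)).1 ^ 2 + (levelTangent F (σ t)).2 ^ 2 = 1 ∧ F (σ t) = F p₀ := by
  have hF₁ : ContDiff ℝ 1 F := hF.of_le (by norm_num)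
  obtain ⟨ε, hε, σ, hσ0, hσ⟩ := exists_hasDerivAt_mapsTo_of_contDiffOn
    (isOpen_setOf_gradSq_pos hF₁) (contDiffOn_levelTangent (k := 1) hF) hp₀
  have hσ2 : ContDiffOn ℝ 2 σ (Ioo (-ε) ε) :=
    contDiffOn_succ_of_hasDerivAt_comp isOpen_Ioo (fun t ht => (hσ t ht).1)
      (fun t ht => (hσ t ht).2) 1 (contDiffOn_levelTangent (k := 1) hF)
  have hlevel : ∀ t ∈ Ioo (-ε) ε, HasDerivAt (F ∘ σ) 0 t := fun t ht => by
    simpa only [fderiv_levelTangent] using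
      (hF₁.differentiable one_ne_zero (σ t)).hasFDerivAt.comp_hasDerivAt t (hσ t ht).1
  refine ⟨ε, hε, σ, hσ0, hσ2, fun t ht => ⟨(hσ t ht).1, levelTangent_sq_add_sq (hσ t ht).2, ?_⟩⟩
  rw [← hσ0]
  exact isOpen_Ioo.is_const_of_deriv_eq_zero isPreconnected_Ioo
    (fun t ht => (hlevel t ht).differentiableAt.differentiableWithinAt)
    (fun t ht => (hlevel t ht).deriv) ht ⟨neg_lt_zero.2 hε, hε⟩

end LevelCurve

theorem fderiv_apply_eq_grad_dotProduct {n : ℕ} (f : (Fin n → ℝ) → ℝ) (x w : Fin n → ℝ) :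
    fderiv ℝ f x w = grad f x ⬝ᵥ w := by
  conv_lhs => rw [pi_eq_sum_univ w]
  simp only [map_sum, map_smul, smul_eq_mul, dotProduct, grad, mul_comm]
  refine Finset.sum_congr rfl fun i _ => ?_
  congr 2
  ext j
  simp [Pi.single_apply, eq_comm]

theorem fderiv_comp_const_add_apply_zero {E : Type*} [NormedAddCommGroup E] [NormedSpace ℝ E]
    {n : ℕ} {f : (Fin n → ℝ) → ℝ} {x : Fin n → ℝ} (hf : DifferentiableAt ℝ f x)
    (T : E →L[ℝ] Fin n → ℝ) (q : E) :
    fderiv ℝ (fun p => f (x + T p)) 0 q = grad f x ⬝ᵥ T q := by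
  have hf' : DifferentiableAt ℝ f (x + T 0) := by rwa [map_zero, add_zero]
  have hd := hf'.hasFDerivAt.comp (0 : E) (T.hasFDerivAt.const_add x)
  rw [map_zero, add_zero] at hd
  rw [show (fun p => f (x + T p)) = f ∘ fun p => x + T p from rfl, hd.fderiv]
  exact fderiv_apply_eq_grad_dotProduct f x (T q)

theorem euclNorm_pos {n : ℕ} {g : Fin n → ℝ} (hg : g ≠ 0) : 0 < euclNorm g :=
  Real.sqrt_pos.2 (by simpa using dotProduct_self_star_pos_iff.2 hg)

theorem dotProduct_inv_euclNorm_smul_self {n : ℕ} (g : Fin n → ℝ) :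
    g ⬝ᵥ (euclNorm g)⁻¹ • g = euclNorm g := by
  have hsq : euclNorm g ^ 2 = g ⬝ᵥ g :=
    Real.sq_sqrt (Finset.sum_nonneg fun i _ => mul_self_nonneg (g i))
  rw [dotProduct_smul, smul_eq_mul, ← hsq]
  rcases eq_or_ne (euclNorm g) 0 with h | h
  · simp [h]
  · field_simp

theorem dotProduct_self_smul_add_smul {ι R : Type*} [Fintype ι] [CommRing R] {v u : ι → R}
    (hv : v ⬝ᵥ v = 1) (hu : u ⬝ᵥ u = 1) (hvu : v ⬝ᵥ u = 0) (a b : R) :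
    (a • v + b • u) ⬝ᵥ (a • v + b • u) = a ^ 2 + b ^ 2 := by
  simp only [add_dotProduct, dotProduct_add, smul_dotProduct, dotProduct_smul, smul_eq_mul, hv, hu,
    hvu, dotProduct_comm u v]
  ring

/-- existence of an arc-length parametrized C² curve through x*
with initial velocity v, lying in the level hypersurface {f = f(x*)} and in the
normal-section plane x* + span{v, ∇f(x*)}. -/
theorem stmt_14 {n : ℕ} (f : (Fin n → ℝ) → ℝ) (hf : ContDiff ℝ 2 f)
    (xs : Fin n → ℝ) (hf0 : grad f xs ≠ 0)
    (v : Fin n → ℝ) (hv1 : euclNorm v = 1) (hv : grad f xs ⬝ᵥ v = 0) :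
    ∃ (ε : ℝ) (γ : ℝ → Fin n → ℝ), 0 < ε ∧
      ContDiffOn ℝ 2 γ (Ioo (-ε) ε) ∧
      γ 0 = xs ∧ deriv γ 0 = v ∧
      (∀ s ∈ Ioo (-ε) ε, euclNorm (deriv γ s) = 1) ∧
      (∀ s ∈ Ioo (-ε) ε, f (γ s) = f xs) ∧
      (∀ s ∈ Ioo (-ε) ε, ∃ a b : ℝ, γ s = xs + a • v + b • grad f xs) := by
  set g := grad f xs
  have hg : 0 < euclNorm g := euclNorm_pos hf0
  set u := (euclNorm g)⁻¹ • g
  have hgu : g ⬝ᵥ u = euclNorm g := dotProduct_inv_euclNorm_smul_self g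
  have huu : u ⬝ᵥ u = 1 := by rw [smul_dotProduct, hgu, smul_eq_mul, inv_mul_cancel₀ hg.ne']
  have hvu : v ⬝ᵥ u = 0 := by simp [u, dotProduct_comm v g, hv]
  set T : ℝ × ℝ →L[ℝ] (Fin n → ℝ) :=
    (ContinuousLinearMap.toSpanSingleton ℝ v).coprod (ContinuousLinearMap.toSpanSingleton ℝ u)
  have hT : ∀ p, T p = p.1 • v + p.2 • u := fun p => rfl
  set F : ℝ × ℝ → ℝ := fun p => f (xs + T p)
  have hF : ContDiff ℝ 2 F := hf.comp (contDiff_const.add T.contDiff)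
  have hFd : ∀ q, fderiv ℝ F 0 q = g ⬝ᵥ T q :=
    fderiv_comp_const_add_apply_zero (hf.differentiable two_ne_zero xs) T
  have h₁ : fderiv ℝ F 0 (1, 0) = 0 := by simpa [hFd, hT] using hv
  have h₂ : fderiv ℝ F 0 (0, 1) = euclNorm g := by simpa [hFd, hT] using hgu
  obtain ⟨ε, hε, σ, hσ0, hσ, hσ'⟩ := exists_unit_speed_level_curve hF (p₀ := 0)
    (add_pos_of_nonneg_of_pos (sq_nonneg _) (pow_pos (h₂ ▸ hg) 2))
  have hγ : ∀ s ∈ Ioo (-ε) ε, HasDerivAt (fun s => xs + T (σ s)) (T (levelTangent F (σ s))) s :=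
    fun s hs => (T.hasFDerivAt.comp_hasDerivAt s (hσ' s hs).1).const_add xs
  refine ⟨ε, fun s => xs + T (σ s), hε, contDiffOn_const.add (T.contDiff.comp_contDiffOn hσ),
    by simp [hσ0], ?_, fun s hs => ?_, fun s hs => ?_, fun s _ => ?_⟩
  · rw [(hγ 0 ⟨neg_lt_zero.2 hε, hε⟩).deriv, hσ0, levelTangent_eq_of_fderiv h₁ (h₂ ▸ hg), hT]
    simp
  · rw [(hγ s hs).deriv, euclNorm, hT, dotProduct_self_smul_add_smul (Real.sqrt_eq_one.mp hv1)
      huu hvu, (hσ' s hs).2.1, Real.sqrt_one]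
  · simpa [F] using (hσ' s hs).2.2
  · exact ⟨(σ s).1, (σ s).2 * (euclNorm g)⁻¹, by simp [hT, u, smul_smul, add_assoc]⟩
end
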